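/- Let θ be a ternary relation on ℕ and n ∈ ℕ. If a finite set X ⊆ ℕ is ω^{n(n+1)/2}-large(θ), then X is ω^n-large*(θ). -/
import Mathlib


/-- The minimum of a finite set of naturals (`0` if empty). -/
noncomputable def minN (X : Finset ℕ) : ℕ := sInf (X : Set ℕ)

/-- The maximum of a finite set of naturals (`0` if empty). -/
def maxN (X : Finset ℕ) : ℕ := X.sup id

/-- `E` lies entirely below `F`. -/
def SetBelow (E F : Finset ℕ) : Prop := ∀ x ∈ E, ∀ y ∈ F, x < y

/-- `E` and `F` are `θ`-apart: for every `x < max E` there is `y < min F`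
with `θ x y z` for all `z < max F`. -/
def ThetaApart (θ : ℕ → ℕ → ℕ → Prop) (E F : Finset ℕ) : Prop :=
  ∀ x < maxN E, ∃ y < minN F, ∀ z < maxN F, θ x y z

/-- `L·k`: finite sets containing `k` pairwise `θ`-apart members `X₀ < ⋯ < X_{k-1}` of `L`. -/
def MulK (θ : ℕ → ℕ → ℕ → Prop) (L : Set (Finset ℕ)) (k : ℕ) : Set (Finset ℕ) :=
  {F | ∃ X : Fin k → Finset ℕ, (∀ i, X i ∈ L) ∧ (∀ i, X i ⊆ F) ∧
    ∀ i j, i < j → SetBelow (X i) (X j) ∧ ThetaApart θ (X i) (X j)}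

/-- `L·σ` for a finite sequence `σ`: `L·ε = L`, `L·(k⌢τ) = (L·k)·τ`. -/
def MulSeq (θ : ℕ → ℕ → ℕ → Prop) (L : Set (Finset ℕ)) : List ℕ → Set (Finset ℕ)
  | [] => L
  | k :: τ => MulSeq θ (MulK θ L k) τ

/-- `L^θ_n`: the `ω^n`-large*(θ) finite sets. -/
noncomputable def LargeStar (θ : ℕ → ℕ → ℕ → Prop) : ℕ → Set (Finset ℕ)
  | 0 => {X | X.Nonempty}
  | n + 1 => {X | X.Nonempty ∧
      X.erase (minN X) ∈ MulSeq θ (LargeStar θ n) (List.replicate (n + 1) (minN X))}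

/-- `ω^n`-largeness(θ) (the non-starred notion). -/
noncomputable def LargeTheta (θ : ℕ → ℕ → ℕ → Prop) : ℕ → Set (Finset ℕ)
  | 0 => {X | X.Nonempty}
  | n + 1 => {X | X.Nonempty ∧ X.erase (minN X) ∈ MulK θ (LargeTheta θ n) (minN X)}

/-- `L·k` without θ-apartness (plain largeness product). -/
def MulKPlain (L : Set (Finset ℕ)) (k : ℕ) : Set (Finset ℕ) :=
  {F | ∃ X : Fin k → Finset ℕ, (∀ i, X i ∈ L) ∧ (∀ i, X i ⊆ F) ∧
    ∀ i j, i < j → SetBelow (X i) (X j)}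

/-- Ketonen–Solovay `ω^n`-largeness (no θ). -/
noncomputable def LargePlain : ℕ → Set (Finset ℕ)
  | 0 => {X | X.Nonempty}
  | n + 1 => {X | X.Nonempty ∧ X.erase (minN X) ∈ MulKPlain (LargePlain n) (minN X)}

/-- `g`-sparsity. -/
def GSparse (g : ℕ → ℕ) (X : Finset ℕ) : Prop := ∀ x ∈ X, ∀ y ∈ X, x < y → g x < y

/-- exp-sparsity. -/
def ExpSparse (X : Finset ℕ) : Prop := ∀ x ∈ X, ∀ y ∈ X, x < y → 4 ^ x < y

/-- `ω^k`-sparsity. -/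
def OmegaSparse (k : ℕ) (X : Finset ℕ) : Prop :=
  ∀ x ∈ X, ∀ y ∈ X, x < y → Finset.Ioc x y ∈ LargePlain k

/-- largeness(θ) implies largeness*(θ). -/

lemma minN_mem {X : Finset ℕ} (h : X.Nonempty) : minN X ∈ X := by
  have h' : (X : Set ℕ).Nonempty := by exact_mod_cast h
  exact_mod_cast Nat.sInf_mem h'

lemma minN_le {X : Finset ℕ} {a : ℕ} (h : a ∈ X) : minN X ≤ a :=
  Nat.sInf_le (by exact_mod_cast h)

lemma minN_mono {X Y : Finset ℕ} (hYX : Y ⊆ X) (hY : Y.Nonempty) :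
    minN X ≤ minN Y := minN_le (hYX (minN_mem hY))

lemma largeTheta_nonempty {θ : ℕ → ℕ → ℕ → Prop} {m : ℕ} {X : Finset ℕ}
    (h : X ∈ LargeTheta θ m) : X.Nonempty := by
  cases m with
  | zero => exact h
  | succ m => exact h.1

lemma mulK_mono {θ : ℕ → ℕ → ℕ → Prop} {L L' : Set (Finset ℕ)} (h : L ⊆ L') (k : ℕ) :
    MulK θ L k ⊆ MulK θ L' k := by
  rintro F ⟨Y, h1, h2, h3⟩
  exact ⟨Y, fun i => h (h1 i), h2, h3⟩

lemma mulSeq_mono {θ : ℕ → ℕ → ℕ → Prop} {L L' : Set (Finset ℕ)} (h : L ⊆ L') :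
    ∀ τ, MulSeq θ L τ ⊆ MulSeq θ L' τ
  | [] => h
  | k :: τ => mulSeq_mono (mulK_mono h k) τ

lemma claimA {θ : ℕ → ℕ → ℕ → Prop} {m k : ℕ} {Z : Finset ℕ}
    (hZ : Z ∈ LargeTheta θ (m + 1)) (hk : k ≤ minN Z) :
    Z ∈ MulK θ {W | W ∈ LargeTheta θ m ∧ k ≤ minN W} k := by
  simp only [LargeTheta] at hZ
  obtain ⟨hne, Y, h1, h2, h3⟩ := hZ
  refine ⟨fun i => Y (Fin.castLE hk i), fun i => ⟨h1 _, ?_⟩,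
    fun i => (h2 _).trans (Finset.erase_subset _ _),
    fun i j hij => h3 _ _ hij⟩
  have hne' := largeTheta_nonempty (h1 (Fin.castLE hk i))
  exact hk.trans (minN_mono ((h2 _).trans (Finset.erase_subset _ _)) hne')

lemma claimB {θ : ℕ → ℕ → ℕ → Prop} (k : ℕ) :
    ∀ (s m : ℕ) (Y : Finset ℕ), Y ∈ LargeTheta θ (m + s) → k ≤ minN Y →
    Y ∈ MulSeq θ {Z | Z ∈ LargeTheta θ m ∧ k ≤ minN Z} (List.replicate s k) := by
  intro s
  induction s with
  | zero => intro m Y h hk; exact ⟨h, hk⟩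
  | succ s ih =>
    intro m Y h hk
    have h' : Y ∈ LargeTheta θ ((m + 1) + s) := by rwa [show (m + 1) + s = m + (s + 1) by omega]
    have hmem := ih (m + 1) Y h' hk
    have := mulSeq_mono (L' := MulK θ {Z | Z ∈ LargeTheta θ m ∧ k ≤ minN Z} k)
      (fun W hW => claimA hW.1 hW.2) (List.replicate s k) hmem
    rw [List.replicate_succ]
    exact this

lemma mulSeq_rep_succ {θ : ℕ → ℕ → ℕ → Prop} (k : ℕ) :
    ∀ (s : ℕ) (L : Set (Finset ℕ)),
    MulSeq θ L (List.replicate (s + 1) k) = MulK θ (MulSeq θ L (List.replicate s k)) k := by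
  intro s
  induction s with
  | zero => intro L; rfl
  | succ s ih =>
    intro L
    have h1 : MulSeq θ L (List.replicate (s + 1 + 1) k)
        = MulSeq θ (MulK θ L k) (List.replicate (s + 1) k) := rfl
    rw [h1, ih (MulK θ L k)]
    rfl

theorem stmt_5 (θ : ℕ → ℕ → ℕ → Prop) (n : ℕ) (X : Finset ℕ) (h3 : 3 ≤ minN X)
    (hX : X ∈ LargeTheta θ (n * (n + 1) / 2)) :
    X ∈ LargeStar θ n := by
 induction n generalizing X with
  | zero => exact hX
  | succ n ih =>
    have hexp : (n + 1) * (n + 1 + 1) / 2 = (n * (n + 1) / 2 + n) + 1 := by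
      have h : (n + 1) * (n + 1 + 1) = n * (n + 1) + 2 * (n + 1) := by ring
      omega
    rw [hexp] at hX
    simp only [LargeTheta] at hX
    obtain ⟨hne, hE⟩ := hX
    obtain ⟨Y, h1, h2, hap⟩ := hE
    refine ⟨hne, ?_⟩
    have hYstar : ∀ i, Y i ∈ MulSeq θ (LargeStar θ n) (List.replicate n (minN X)) := by
      intro i
      have hsub : Y i ⊆ X := (h2 i).trans (Finset.erase_subset _ _)
      have hmin : minN X ≤ minN (Y i) := minN_mono hsub (largeTheta_nonempty (h1 i))
      have hb := claimB (minN X) n (n * (n + 1) / 2) (Y i) (h1 i) hmin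
      exact mulSeq_mono (fun Z hZ => ih Z (h3.trans hZ.2) hZ.1) _ hb
    rw [mulSeq_rep_succ]
    exact ⟨Y, hYstar, h2, hap⟩
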